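/- Let T be a finite tree with a perfect matching M and |V(T)| ≥ 2, and let xy ∈ M. Then T_B^3 has a Hamiltonian path from x to y. -/

import Mathlib

/-- The `t`-th bi-power of a graph `G`: two vertices are adjacent iff their
distance in `G` is odd and at most `t`. -/
def SimpleGraph.biPower {V : Type*} (G : SimpleGraph V) (t : ℕ) : SimpleGraph V where
  Adj x y := Odd (G.dist x y) ∧ G.dist x y ≤ t
  symm := ⟨fun x y h => by show Odd (G.dist y x) ∧ G.dist y x ≤ t; rw [SimpleGraph.dist_comm]; exact h⟩
  loopless := ⟨fun x h => by simp [SimpleGraph.dist_self, Nat.odd_iff] at h⟩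

/-!
Induct on finite vertex sets `A` of the tree that contain every path between two of their
vertices and are matched within themselves, proving more: for every matching edge `xy` in `A`,
`T_B^3[A]` has a Hamiltonian `(x, y)`-path whose second vertex is at distance 2 from `y` and whose
penultimate vertex is at distance 2 from `x`.

If `x` has a neighbour `z ∈ A` other than `y`, deleting the edge `xz` splits `A` into the side of
`x`, which contains `y`, and the side of `z`, which contains the partner `z'` of `z`. Induction
gives paths `x … b y` and `z … z'`, and `x … b z … z' y` is the required path: `b = x` or
`d(x, b) = 2`, so `d(b, z)` is 1 or 3, and `d(z', y) = 3`. By symmetry the same works if `y` has a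
neighbour in `A` other than `x`; otherwise `A = {x, y}`.
-/

namespace SimpleGraph

variable {V : Type*} {T : SimpleGraph V} {A B : Set V} {u v w x y z : V}

theorem IsTree.length_eq_dist (hT : T.IsTree) {p : T.Walk u v} (hp : p.IsPath) :
    p.length = T.dist u v := by
  obtain ⟨q, hq, hql⟩ := (hT.connected u v).exists_path_of_dist
  rw [(hT.existsUnique_path u v).unique hp hq, hql]

def IsConvex (T : SimpleGraph V) (A : Set V) : Prop :=
  ∀ ⦃u v : V⦄ (p : T.Walk u v), p.IsPath → u ∈ A → v ∈ A → ∀ w ∈ p.support, w ∈ A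

theorem IsConvex.inter (hA : T.IsConvex A) (hB : T.IsConvex B) : T.IsConvex (A ∩ B) :=
  fun _ _ p hp hu hv w hw => ⟨hA p hp hu.1 hv.1 w hw, hB p hp hu.2 hv.2 w hw⟩

theorem IsConvex.eq_or_eq_of_forall_adj (hA : T.IsConvex A) (hT : T.Preconnected) (hx : x ∈ A)
    (hxy : ∀ z ∈ A, T.Adj x z → z = y) (hyx : ∀ z ∈ A, T.Adj y z → z = x) (hv : v ∈ A) :
    v = x ∨ v = y := by
  obtain ⟨p, hp⟩ := (hT x v).exists_isPath
  by_contra hvxy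
  obtain ⟨d, hd, hfst, hsnd⟩ := p.exists_boundary_dart {x, y} (by simp) (by simpa using hvxy)
  have hdA : d.snd ∈ A := hA p hp hx hv _ (p.dart_snd_mem_support_of_mem_darts hd)
  rcases hfst with h | h
  · exact hsnd (.inr (hxy _ hdA (h ▸ d.adj)))
  · exact hsnd (.inl (hyx _ hdA (h ▸ d.adj)))

def side (T : SimpleGraph V) (x z : V) : Set V := {v | (T.deleteEdges {s(x, z)}).Reachable x v}

theorem mem_side_self : x ∈ T.side x z := Reachable.refl x

theorem IsTree.notMem_side (hT : T.IsTree) (hxz : T.Adj x z) : z ∉ T.side x z :=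
  isBridge_iff.1 (isAcyclic_iff_forall_adj_isBridge.1 hT.isAcyclic hxz)

theorem IsTree.disjoint_side (hT : T.IsTree) (hxz : T.Adj x z) :
    Disjoint (T.side x z) (T.side z x) := by
  refine Set.disjoint_left.2 fun v hx hz => hT.notMem_side hxz (hx.trans ?_)
  have hz : (T.deleteEdges {s(x, z)}).Reachable z v := by rw [Sym2.eq_swap]; exact hz
  exact hz.symm

theorem IsTree.mem_side_of_adj (hT : T.IsTree) (hxz : T.Adj x z) (h : T.Adj v w)
    (hv : v ∈ T.side x z) (hvw : ¬(v = x ∧ w = z)) : w ∈ T.side x z := by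
  refine hv.trans (deleteEdges_adj.2 ⟨h, fun he => ?_⟩).reachable
  rcases Sym2.eq_iff.1 he with hvw' | ⟨rfl, -⟩
  · exact hvw hvw'
  · exact hT.notMem_side hxz hv

theorem IsTree.mem_side_or_mem_side (hT : T.IsTree) (hxz : T.Adj x z) (v : V) :
    v ∈ T.side x z ∨ v ∈ T.side z x := by
  by_contra hv
  obtain ⟨d, -, hfst, hsnd⟩ := (hT.connected x v).some.exists_boundary_dart
    (T.side x z ∪ T.side z x) (.inl mem_side_self) hv
  rcases hfst with h | h
  · by_cases hd : d.fst = x ∧ d.snd = z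
    · exact hsnd (.inr (hd.2 ▸ mem_side_self))
    · exact hsnd (.inl (hT.mem_side_of_adj hxz d.adj h hd))
  · by_cases hd : d.fst = z ∧ d.snd = x
    · exact hsnd (.inl (hd.2 ▸ mem_side_self))
    · exact hsnd (.inr (hT.mem_side_of_adj hxz.symm d.adj h hd))

theorem IsTree.isConvex_side (hT : T.IsTree) : T.IsConvex (T.side x z) := by
  classical
  intro u v p hp hu hv w hw
  obtain ⟨q, hq⟩ := (hu.symm.trans hv).exists_isPath
  rw [(hT.existsUnique_path u v).unique hp (hq.mapLe (deleteEdges_le _)),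
    Walk.support_mapLe_eq_support] at hw
  exact hu.trans ⟨q.takeUntil w hw⟩

theorem IsTree.dist_eq_dist_add_one_of_mem_side (hT : T.IsTree) (hxz : T.Adj x z)
    (hv : v ∈ T.side x z) : T.dist v z = T.dist v x + 1 := by
  classical
  obtain ⟨q, hq⟩ := hv.symm.exists_isPath
  have hz : z ∉ q.support := fun hz => hT.notMem_side hxz (hv.trans ⟨q.takeUntil z hz⟩)
  have hp := (hq.mapLe (deleteEdges_le _)).concat (by rwa [Walk.support_mapLe_eq_support]) hxz
  rw [← hT.length_eq_dist hp, ← hT.length_eq_dist (hq.mapLe (deleteEdges_le _)),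
    Walk.length_concat]

theorem biPower_three_adj_of_dist (h : T.dist u v = 1 ∨ T.dist u v = 3) :
    (T.biPower 3).Adj u v := by
  rcases h with h | h <;> exact ⟨by rw [h]; decide, by omega⟩

structure IsBiPowerHamPath (T : SimpleGraph V) (A : Set V) (x y : V) (m : List V) : Prop where
  isChain : (x :: m ++ [y]).IsChain (T.biPower 3).Adj
  nodup : (x :: m ++ [y]).Nodup
  mem_iff : ∀ v, v ∈ x :: m ++ [y] ↔ v ∈ A
  dist_head : ∀ a ∈ m.head?, T.dist y a = 2
  dist_getLast : ∀ b ∈ m.getLast?, T.dist x b = 2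

namespace IsBiPowerHamPath

variable {m n : List V}

theorem pair (hxy : T.Adj x y) (hA : ∀ v, v ∈ A ↔ v = x ∨ v = y) : IsBiPowerHamPath T A x y [] where
  isChain := by simpa using biPower_three_adj_of_dist (.inl (dist_eq_one_iff_adj.2 hxy))
  nodup := by simpa using hxy.ne
  mem_iff v := by simp [hA]
  dist_head := by simp
  dist_getLast := by simp

theorem reverse (h : IsBiPowerHamPath T A y x m) : IsBiPowerHamPath T A x y m.reverse := by
  have hrev : x :: m.reverse ++ [y] = (y :: m ++ [x]).reverse := by simp
  refine ⟨?_, ?_, fun v => ?_, ?_, ?_⟩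
  · rw [hrev, List.isChain_reverse]
    exact h.isChain.imp fun _ _ hab => hab.symm
  · rw [hrev, List.nodup_reverse]
    exact h.nodup
  · rw [hrev, List.mem_reverse]
    exact h.mem_iff v
  · simpa using h.dist_getLast
  · simpa using h.dist_head

theorem splice (h₁ : IsBiPowerHamPath T A x y m) (h₂ : IsBiPowerHamPath T B z w n)
    (hAB : Disjoint A B) (hxz : (T.biPower 3).Adj x z)
    (hbz : ∀ b ∈ m.getLast?, (T.biPower 3).Adj b z) (hwy : (T.biPower 3).Adj w y)
    (hyz : T.dist y z = 2) (hxw : T.dist x w = 2) :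
    IsBiPowerHamPath T (A ∪ B) x y (m ++ z :: n ++ [w]) := by
  have hperm : (x :: (m ++ z :: n ++ [w]) ++ [y]).Perm ((x :: m ++ [y]) ++ (z :: n ++ [w])) := by
    simpa using (List.perm_append_comm (l₁ := z :: n ++ [w]) (l₂ := [y])).append_left (x :: m)
  refine ⟨?_, hperm.nodup_iff.2 ?_, fun v => ?_, ?_, by rw [List.getLast?_concat]; simpa using hxw⟩
  · have hsplit : x :: (m ++ z :: n ++ [w]) ++ [y] = (x :: m) ++ ((z :: n ++ [w]) ++ [y]) := by
      simp
    rw [hsplit, List.isChain_append, List.isChain_append]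
    refine ⟨h₁.isChain.left_of_append, ⟨h₂.isChain, List.isChain_singleton y, ?_⟩, ?_⟩
    · rw [List.getLast?_concat]
      simpa using hwy
    · simp only [List.getLast?_cons, Option.mem_some_iff, List.cons_append, List.head?_cons]
      rintro _ rfl _ rfl
      cases hb : m.getLast? with
      | none => exact hxz
      | some b => exact hbz b hb
  · exact List.nodup_append.2 ⟨h₁.nodup, h₂.nodup, fun a ha b hb =>
      hAB.ne_of_mem ((h₁.mem_iff a).1 ha) ((h₂.mem_iff b).1 hb)⟩
  · rw [hperm.mem_iff, List.mem_append, h₁.mem_iff, h₂.mem_iff]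
    rfl
  · cases m with
    | nil => simpa using hyz
    | cons a m => simpa using h₁.dist_head a (by simp)

end IsBiPowerHamPath

theorem IsTree.isBiPowerHamPath_of_sides (hT : T.IsTree) (hxy : T.Adj x y) (hxz : T.Adj x z)
    (hzw : T.Adj z w) (hzy : z ≠ y) (hwx : w ≠ x) {m n : List V}
    (h₁ : IsBiPowerHamPath T (A ∩ T.side x z) x y m)
    (h₂ : IsBiPowerHamPath T (A ∩ T.side z x) z w n) :
    IsBiPowerHamPath T A x y (m ++ z :: n ++ [w]) := by
  have hy : y ∈ T.side x z := hT.mem_side_of_adj hxz hxy mem_side_self fun h => hzy h.2.symm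
  have hw : w ∈ T.side z x := hT.mem_side_of_adj hxz.symm hzw mem_side_self fun h => hwx h.2
  have hw' : w ∈ T.side x y := hT.mem_side_of_adj hxy hzw
    (hT.mem_side_of_adj hxy hxz mem_side_self fun h => hzy h.2) fun h => hxz.ne' h.1
  have hyz : T.dist y z = 2 := by
    rw [hT.dist_eq_dist_add_one_of_mem_side hxz hy, dist_comm, dist_eq_one_iff_adj.2 hxy]
  have hwx : T.dist w x = 2 := by
    rw [hT.dist_eq_dist_add_one_of_mem_side hxz.symm hw, dist_eq_one_iff_adj.2 hzw.symm]
  have hwy : T.dist w y = 3 := by rw [hT.dist_eq_dist_add_one_of_mem_side hxy hw', hwx]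
  have hbz : ∀ b ∈ m.getLast?, (T.biPower 3).Adj b z := by
    intro b hb
    have hbA := (h₁.mem_iff b).1 (by simp [List.mem_of_getLast? hb])
    refine biPower_three_adj_of_dist (.inr ?_)
    rw [hT.dist_eq_dist_add_one_of_mem_side hxz hbA.2, dist_comm, h₁.dist_getLast b hb]
  have hA : A ∩ T.side x z ∪ A ∩ T.side z x = A := by
    rw [← Set.inter_union_distrib_left,
      Set.eq_univ_of_forall (s := T.side x z ∪ _) (hT.mem_side_or_mem_side hxz), Set.inter_univ]
  exact hA ▸ h₁.splice h₂ ((hT.disjoint_side hxz).mono Set.inter_subset_right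
    Set.inter_subset_right) (biPower_three_adj_of_dist (.inl (dist_eq_one_iff_adj.2 hxz))) hbz
    (biPower_three_adj_of_dist (.inr hwy)) hyz (by rw [dist_comm, hwx])

theorem IsTree.exists_adj_mem_inter_side (hT : T.IsTree) {M : T.Subgraph} (hxz : T.Adj x z)
    (hM : ¬M.Adj x z) (hAM : ∀ v ∈ A, ∃ w ∈ A, M.Adj v w) :
    ∀ v ∈ A ∩ T.side x z, ∃ w ∈ A ∩ T.side x z, M.Adj v w := by
  rintro v ⟨hvA, hv⟩
  obtain ⟨w, hw, hvw⟩ := hAM v hvA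
  exact ⟨w, ⟨hw, hT.mem_side_of_adj hxz (M.adj_sub hvw) hv fun h => hM (h.1 ▸ h.2 ▸ hvw)⟩, hvw⟩

theorem IsTree.exists_isBiPowerHamPath (hT : T.IsTree) {M : T.Subgraph} (hM : M.IsMatching)
    (hfin : A.Finite) (hA : T.IsConvex A) (hAM : ∀ v ∈ A, ∃ w ∈ A, M.Adj v w) (hxy : M.Adj x y)
    (hx : x ∈ A) : ∃ m, IsBiPowerHamPath T A x y m := by
  induction hn : A.ncard using Nat.strong_induction_on generalizing A x y with
  | _ n ih =>
  have step {x y z : V} (hxy : M.Adj x y) (hx : x ∈ A) (hz : z ∈ A) (hxz : T.Adj x z)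
      (hzy : z ≠ y) : ∃ m, IsBiPowerHamPath T A x y m := by
    have hMxz : ¬M.Adj x z := fun h => hzy (hM.eq_of_adj_left h hxy)
    have hlt {a b : V} (hab : T.Adj a b) (hb : b ∈ A) : (A ∩ T.side a b).ncard < n :=
      hn ▸ Set.ncard_lt_ncard (Set.inter_ssubset_left_iff.2 fun h => hT.notMem_side hab (h hb)) hfin
    obtain ⟨w, hw, hzw⟩ := hAM z hz
    obtain ⟨m, hm⟩ := ih _ (hlt hxz hz) (hfin.inter_of_left _) (hA.inter hT.isConvex_side)
      (hT.exists_adj_mem_inter_side hxz hMxz hAM) hxy ⟨hx, mem_side_self⟩ rfl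
    obtain ⟨l, hl⟩ := ih _ (hlt hxz.symm hx) (hfin.inter_of_left _) (hA.inter hT.isConvex_side)
      (hT.exists_adj_mem_inter_side hxz.symm (fun h => hMxz h.symm) hAM) hzw ⟨hz, mem_side_self⟩ rfl
    exact ⟨_, hT.isBiPowerHamPath_of_sides (M.adj_sub hxy) hxz (M.adj_sub hzw) hzy
      (fun h => hMxz (h ▸ hzw).symm) hm hl⟩
  have hy : y ∈ A := by
    obtain ⟨w, hw, hxw⟩ := hAM x hx
    rwa [hM.eq_of_adj_left hxy hxw]
  by_cases hxz : ∃ z ∈ A, T.Adj x z ∧ z ≠ y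
  · obtain ⟨z, hz, hxz, hzy⟩ := hxz
    exact step hxy hx hz hxz hzy
  by_cases hyz : ∃ z ∈ A, T.Adj y z ∧ z ≠ x
  · obtain ⟨z, hz, hyz, hzx⟩ := hyz
    obtain ⟨m, hm⟩ := step hxy.symm hy hz hyz hzx
    exact ⟨m.reverse, hm.reverse⟩
  push Not at hxz hyz
  refine ⟨[], .pair (M.adj_sub hxy) fun v => ⟨fun hv => ?_, ?_⟩⟩
  · exact hA.eq_or_eq_of_forall_adj hT.connected.preconnected hx hxz hyz hv
  · rintro (rfl | rfl) <;> assumption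

end SimpleGraph

open SimpleGraph

theorem tree_biPower_three_hamiltonian_path_general {V : Type*} [Fintype V] [DecidableEq V]
    (T : SimpleGraph V) (hT : T.IsTree) (M : T.Subgraph) (hM : M.IsPerfectMatching)
    (x y : V) (hxy : M.Adj x y) :
    ∃ p : (T.biPower 3).Walk x y, p.IsHamiltonian := by
  obtain ⟨m, hm⟩ := hT.exists_isBiPowerHamPath hM.1 Set.finite_univ
    (fun _ _ _ _ _ _ w _ => Set.mem_univ w)
    (fun v _ => ⟨_, trivial, (Subgraph.isPerfectMatching_iff.1 hM v).exists.choose_spec⟩)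
    hxy trivial
  obtain ⟨p, hp⟩ : ∃ p : (T.biPower 3).Walk x y, p.support = x :: m ++ [y] :=
    ⟨(Walk.ofSupport (x :: m ++ [y]) (by simp) hm.isChain).copy (by simp) (by simp),
      (Walk.support_copy _ _ _).trans (Walk.support_ofSupport _ _)⟩
  exact ⟨p, fun v => hp ▸ List.count_eq_one_of_mem hm.nodup ((hm.mem_iff v).2 trivial)⟩

/-- Let `T` be a finite tree with a perfect matching `M` and at least two
vertices, and let `xy ∈ M`.  Then `T_B^3` has a Hamiltonian path from `x` to
`y`. -/
theorem tree_biPower_three_hamiltonian_path {V : Type*} [Fintype V] [DecidableEq V]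
    (T : SimpleGraph V) (hT : T.IsTree) (M : T.Subgraph) (hM : M.IsPerfectMatching)
    (hcard : 2 ≤ Fintype.card V) (x y : V) (hxy : M.Adj x y) :
    ∃ p : (T.biPower 3).Walk x y, p.IsHamiltonian :=
  tree_biPower_three_hamiltonian_path_general T hT M hM x y hxy
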